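/- Let 0 < p < 1/2 (asymmetric simple random walk with downward drift). Then E(M_n^+) → p/(1 - 2p) as n → ∞. -/

import Mathlib

/-!
Write `r = p / q` with `q = 1 - p`. Flipping every step after the first passage to a level
`k ≥ 1` turns a path of weight `w` under the up-probability `p` into a path of weight `r⁻ᵏ w`
under the up-probability `q`, so `P_p(M_n ≥ k) = rᵏ P_q(M_n ≥ k)` and
`E_p M_n = ∑_{k=1}^n rᵏ P_q(M_n ≥ k)`. As `q > 1/2`, a Chernoff bound gives
`P_q(M_n ≥ k) ≥ P_q(S_n ≥ k) → 1` for every fixed `k`, and dominated convergence for series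
yields `E_p M_n → ∑_{k ≥ 1} rᵏ = p / (1 - 2p)`.
-/

open Finset Filter

/-- The value `±1` of a single step of the walk, driven by a Boolean. -/
def step (b : Bool) : ℤ := if b then 1 else -1

/-- The partial sum `S_j = X_1 + ⋯ + X_j` of the simple random walk driven by `ω`. -/
def walk {n : ℕ} (ω : Fin n → Bool) (j : ℕ) : ℤ :=
  ∑ i ∈ Finset.univ.filter fun i : Fin n => (i : ℕ) < j, step (ω i)

/-- `M_n^+ = max_{0 ≤ j ≤ n} S_j`. -/
def mplus {n : ℕ} (ω : Fin n → Bool) : ℤ :=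
  (Finset.range (n + 1)).sup' (by simp) (walk ω)

/-- `M_n^- = -min_{0 ≤ j ≤ n} S_j`. -/
def mminus {n : ℕ} (ω : Fin n → Bool) : ℤ :=
  -((Finset.range (n + 1)).inf' (by simp) (walk ω))

/-- The probability weight of the path `ω` when `P{Xᵢ = 1} = p`, `P{Xᵢ = -1} = 1 - p`,
independently over `i`. -/
def wt (p : ℝ) {n : ℕ} (ω : Fin n → Bool) : ℝ :=
  ∏ i, if ω i then p else 1 - p

/-- The probability of an event `A` for a walk of length `n`. -/
noncomputable def prob (p : ℝ) {n : ℕ} (A : Set (Fin n → Bool)) : ℝ :=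
  ∑ ω : Fin n → Bool, A.indicator (wt p) ω

/-- The expectation of a functional `f` of a walk of length `n`. -/
noncomputable def expectation (p : ℝ) {n : ℕ} (f : (Fin n → Bool) → ℝ) : ℝ :=
  ∑ ω : Fin n → Bool, wt p ω * f ω

lemma walk_zero {n : ℕ} (ω : Fin n → Bool) : walk ω 0 = 0 := by
  simp [walk]

lemma walk_succ {n : ℕ} (ω : Fin n → Bool) {j : ℕ} (hj : j < n) :
    walk ω (j + 1) = walk ω j + step (ω ⟨j, hj⟩) := by
  have hfilter : (univ.filter fun i : Fin n => (i : ℕ) < j + 1)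
      = insert ⟨j, hj⟩ (univ.filter fun i : Fin n => (i : ℕ) < j) := by
    ext i
    simp only [mem_filter, mem_univ, true_and, mem_insert, Fin.ext_iff]
    omega
  rw [walk, hfilter, sum_insert (by simp), add_comm]
  rfl

lemma walk_congr {n : ℕ} {ω ω' : Fin n → Bool} {j : ℕ}
    (h : ∀ i : Fin n, (i : ℕ) < j → ω i = ω' i) : walk ω j = walk ω' j :=
  sum_congr rfl fun i hi => by rw [h i (mem_filter.1 hi).2]

lemma walk_self {n : ℕ} (ω : Fin n → Bool) : walk ω n = ∑ i, step (ω i) := by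
  rw [walk, filter_true_of_mem fun i _ => i.isLt]

lemma step_le_one (b : Bool) : step b ≤ 1 := by
  cases b <;> decide

lemma walk_le {n : ℕ} (ω : Fin n → Bool) (j : ℕ) : walk ω j ≤ n :=
  calc walk ω j ≤ ∑ _i ∈ univ.filter fun i : Fin n => (i : ℕ) < j, (1 : ℤ) :=
        sum_le_sum fun i _ => step_le_one _
    _ ≤ n := by
        simpa using card_filter_le (univ : Finset (Fin n)) fun i : Fin n => (i : ℕ) < j

lemma le_mplus_iff {n : ℕ} {ω : Fin n → Bool} {k : ℤ} :
    k ≤ mplus ω ↔ ∃ j ≤ n, k ≤ walk ω j := by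
  simp [mplus, le_sup'_iff]

lemma walk_le_mplus {n : ℕ} (ω : Fin n → Bool) {j : ℕ} (hj : j ≤ n) : walk ω j ≤ mplus ω :=
  le_mplus_iff.2 ⟨j, hj, le_rfl⟩

lemma mplus_nonneg {n : ℕ} (ω : Fin n → Bool) : 0 ≤ mplus ω :=
  walk_zero ω ▸ walk_le_mplus ω (Nat.zero_le n)

lemma mplus_le {n : ℕ} (ω : Fin n → Bool) : mplus ω ≤ n :=
  sup'_le _ _ fun j _ => walk_le ω j

/-- As `sInf ∅ = 0`, this is the first passage time to `k` only when `k ≤ mplus ω`. -/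
noncomputable def hitTime {n : ℕ} (k : ℤ) (ω : Fin n → Bool) : ℕ :=
  sInf {j | k ≤ walk ω j}

section hitTime

variable {n : ℕ} {k : ℤ} {ω : Fin n → Bool}

lemma hitTime_le (h : k ≤ mplus ω) : hitTime k ω ≤ n := by
  obtain ⟨j, hjn, hj⟩ := le_mplus_iff.1 h
  exact (Nat.sInf_le hj).trans hjn

lemma le_walk_hitTime (h : k ≤ mplus ω) : k ≤ walk ω (hitTime k ω) := by
  obtain ⟨j, -, hj⟩ := le_mplus_iff.1 h
  exact Nat.sInf_mem (s := {j | k ≤ walk ω j}) ⟨j, hj⟩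

lemma walk_lt_of_lt_hitTime {j : ℕ} (hj : j < hitTime k ω) : walk ω j < k :=
  lt_of_not_ge (Nat.notMem_of_lt_sInf hj)

lemma walk_hitTime (hk : 0 < k) (h : k ≤ mplus ω) : walk ω (hitTime k ω) = k := by
  have hle := le_walk_hitTime h
  obtain ⟨j, hj⟩ : ∃ j, hitTime k ω = j + 1 :=
    Nat.exists_eq_add_one.2 (Nat.pos_of_ne_zero fun h0 => by rw [h0, walk_zero] at hle; omega)
  have hjn : j < n := by have := hitTime_le h; omega
  have hbefore := walk_lt_of_lt_hitTime (k := k) (ω := ω) (j := j) (by omega)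
  rw [hj, walk_succ ω hjn] at hle ⊢
  have := step_le_one (ω ⟨j, hjn⟩)
  omega

lemma hitTime_eq_of_walk_eq {ω' : Fin n → Bool} (h : k ≤ mplus ω)
    (hω' : ∀ j ≤ hitTime k ω, walk ω' j = walk ω j) : hitTime k ω' = hitTime k ω := by
  have hmem : k ≤ walk ω' (hitTime k ω) := (hω' _ le_rfl).symm ▸ le_walk_hitTime h
  refine le_antisymm (Nat.sInf_le hmem) (le_of_not_gt fun hlt => ?_)
  have h' : k ≤ walk ω' (hitTime k ω') := Nat.sInf_mem (s := {j | k ≤ walk ω' j}) ⟨_, hmem⟩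
  rw [hω' _ hlt.le] at h'
  exact (walk_lt_of_lt_hitTime hlt).not_ge h'

end hitTime

lemma prod_zpow_eq_zpow_sum {ι G : Type*} [CommGroupWithZero G] {a : G} (ha : a ≠ 0)
    (s : Finset ι) (f : ι → ℤ) : ∏ i ∈ s, a ^ f i = a ^ ∑ i ∈ s, f i := by
  induction s using Finset.cons_induction with
  | empty => simp
  | cons i s hi ih => rw [prod_cons, sum_cons, ih, zpow_add₀ ha]

def flipFrom {n : ℕ} (j : ℕ) (ω : Fin n → Bool) : Fin n → Bool :=
  fun i => if (i : ℕ) < j then ω i else !ω i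

lemma flipFrom_flipFrom {n : ℕ} (j : ℕ) (ω : Fin n → Bool) : flipFrom j (flipFrom j ω) = ω := by
  funext i
  by_cases hi : (i : ℕ) < j <;> simp [flipFrom, hi]

lemma walk_flipFrom {n : ℕ} (ω : Fin n → Bool) {i j : ℕ} (hij : i ≤ j) :
    walk (flipFrom j ω) i = walk ω i :=
  walk_congr fun _ hl => if_pos (hl.trans_le hij)

/-- Exchanging `p` and `1 - p` on the steps before `j` rescales the weight by the likelihood
ratio `(p / (1 - p)) ^ S_j`; after `j` the flip and the exchange cancel. -/
lemma wt_eq_zpow_mul_wt_flipFrom {p : ℝ} (hp0 : p ≠ 0) (hp1 : 1 - p ≠ 0) {n : ℕ}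
    (ω : Fin n → Bool) (j : ℕ) :
    wt p ω = (p / (1 - p)) ^ walk ω j * wt (1 - p) (flipFrom j ω) := by
  have hfactor : ∀ i : Fin n, (if ω i then p else 1 - p) =
      (if (i : ℕ) < j then (p / (1 - p)) ^ step (ω i) else 1) *
        (if flipFrom j ω i then 1 - p else 1 - (1 - p)) := by
    intro i
    by_cases hi : (i : ℕ) < j <;> cases hω : ω i <;> simp [flipFrom, step, hi, hω] <;> field_simp
  rw [wt, wt, prod_congr rfl fun i _ => hfactor i, prod_mul_distrib, ← prod_filter,
    prod_zpow_eq_zpow_sum (div_ne_zero hp0 hp1), walk]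

section prob

variable {p : ℝ} {n : ℕ}

lemma wt_nonneg (hp0 : 0 ≤ p) (hp1 : p ≤ 1) (ω : Fin n → Bool) : 0 ≤ wt p ω :=
  prod_nonneg fun i _ => by split <;> linarith

lemma sum_wt_mul_prod (p : ℝ) (f : Bool → ℝ) :
    ∑ ω : Fin n → Bool, wt p ω * ∏ i, f (ω i) = (p * f true + (1 - p) * f false) ^ n := by
  simp_rw [wt, ← prod_mul_distrib]
  rw [← Fintype.prod_sum (fun (_ : Fin n) (b : Bool) => (if b then p else 1 - p) * f b)]
  simp

lemma sum_wt (p : ℝ) : ∑ ω : Fin n → Bool, wt p ω = 1 := by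
  simpa using sum_wt_mul_prod (n := n) p fun _ => 1

lemma prob_eq_sum_filter (p : ℝ) (A : Set (Fin n → Bool)) [DecidablePred (· ∈ A)] :
    prob p A = ∑ ω ∈ univ.filter (· ∈ A), wt p ω := by
  rw [prob, sum_filter]
  exact sum_congr rfl fun ω _ => Set.indicator_apply _ _ _

lemma prob_nonneg (hp0 : 0 ≤ p) (hp1 : p ≤ 1) (A : Set (Fin n → Bool)) : 0 ≤ prob p A :=
  sum_nonneg fun ω _ => Set.indicator_nonneg (fun ω _ => wt_nonneg hp0 hp1 ω) ω

lemma prob_mono (hp0 : 0 ≤ p) (hp1 : p ≤ 1) {A B : Set (Fin n → Bool)} (h : A ⊆ B) :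
    prob p A ≤ prob p B :=
  sum_le_sum fun ω _ => Set.indicator_le_indicator_of_subset h (wt_nonneg hp0 hp1) ω

lemma prob_le_one (hp0 : 0 ≤ p) (hp1 : p ≤ 1) (A : Set (Fin n → Bool)) : prob p A ≤ 1 := by
  simpa [prob, sum_wt] using prob_mono hp0 hp1 (Set.subset_univ A)

lemma prob_compl (p : ℝ) (A : Set (Fin n → Bool)) : prob p Aᶜ = 1 - prob p A := by
  rw [eq_sub_iff_add_eq, prob, prob, ← sum_add_distrib, ← sum_wt p]
  exact sum_congr rfl fun ω _ => congrFun (Set.indicator_compl_add_self A (wt p)) ω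

end prob

noncomputable def reflect {n : ℕ} (k : ℤ) (ω : Fin n → Bool) : Fin n → Bool :=
  flipFrom (hitTime k ω) ω

section reflect

variable {n : ℕ} {k : ℤ} {ω : Fin n → Bool}

lemma hitTime_reflect (h : k ≤ mplus ω) : hitTime k (reflect k ω) = hitTime k ω :=
  hitTime_eq_of_walk_eq h fun _ hj => walk_flipFrom ω hj

lemma le_mplus_reflect (h : k ≤ mplus ω) : k ≤ mplus (reflect k ω) :=
  le_mplus_iff.2 ⟨hitTime k ω, hitTime_le h, (walk_flipFrom ω le_rfl).symm ▸ le_walk_hitTime h⟩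

lemma reflect_reflect (h : k ≤ mplus ω) : reflect k (reflect k ω) = ω := by
  rw [reflect, hitTime_reflect h]
  exact flipFrom_flipFrom _ ω

lemma prob_le_mplus_eq {p : ℝ} (hp0 : 0 < p) (hp1 : p < 1) (hk : 0 < k) :
    prob p {ω : Fin n → Bool | k ≤ mplus ω}
      = (p / (1 - p)) ^ k * prob (1 - p) {ω : Fin n → Bool | k ≤ mplus ω} := by
  classical
  rw [prob_eq_sum_filter, prob_eq_sum_filter, mul_sum]
  have hA : ∀ {ω : Fin n → Bool}, ω ∈ univ.filter (· ∈ {ω | k ≤ mplus ω}) ↔ k ≤ mplus ω := by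
    simp
  refine sum_nbij' (reflect k) (reflect k) (fun ω hω => hA.2 (le_mplus_reflect (hA.1 hω)))
    (fun ω hω => hA.2 (le_mplus_reflect (hA.1 hω))) (fun ω hω => reflect_reflect (hA.1 hω))
    (fun ω hω => reflect_reflect (hA.1 hω)) fun ω hω => ?_
  rw [wt_eq_zpow_mul_wt_flipFrom hp0.ne' (sub_ne_zero.2 hp1.ne') ω (hitTime k ω),
    walk_hitTime hk (hA.1 hω), reflect]

end reflect

lemma intCast_eq_sum_range_ite {a : ℤ} {m : ℕ} (ha0 : 0 ≤ a) (ham : a ≤ m) :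
    (a : ℝ) = ∑ j ∈ range m, if (j : ℤ) < a then 1 else 0 := by
  lift a to ℕ using ha0
  have hfilter : (range m).filter (fun j : ℕ => (j : ℤ) < a) = range a := by
    ext j
    simp only [mem_filter, mem_range]
    omega
  rw [← sum_filter, hfilter]
  simp

lemma expectation_eq_sum_prob_lt (p : ℝ) {n m : ℕ} (f : (Fin n → Bool) → ℤ)
    (hf0 : ∀ ω, 0 ≤ f ω) (hfm : ∀ ω, f ω ≤ m) :
    expectation p (fun ω => (f ω : ℝ)) = ∑ j ∈ range m, prob p {ω | (j : ℤ) < f ω} := by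
  simp_rw [expectation, intCast_eq_sum_range_ite (hf0 _) (hfm _), mul_sum, prob,
    Set.indicator_apply, Set.mem_ofPred_eq, mul_ite, mul_one, mul_zero]
  exact sum_comm

/-- Chernoff bound: `1{S_n < K} ≤ t ^ (K - 1 - S_n)` and `E t ^ (-S_n)` factorises. -/
lemma prob_walk_lt_le {p t : ℝ} (hp0 : 0 ≤ p) (hp1 : p ≤ 1) (ht : 1 ≤ t) (K : ℤ) (n : ℕ) :
    prob p {ω : Fin n → Bool | walk ω n < K} ≤ t ^ (K - 1) * (p * t⁻¹ + (1 - p) * t) ^ n := by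
  have ht0 : t ≠ 0 := by positivity
  have hprod : ∀ ω : Fin n → Bool, ∏ i, t ^ (-step (ω i)) = t ^ (-walk ω n) := by
    intro ω
    rw [prod_zpow_eq_zpow_sum ht0, sum_neg_distrib, walk_self]
  have hpoint : ∀ ω : Fin n → Bool, {ω : Fin n → Bool | walk ω n < K}.indicator (wt p) ω
      ≤ wt p ω * (t ^ (K - 1) * ∏ i, t ^ (-step (ω i))) := by
    intro ω
    rw [hprod, ← zpow_add₀ ht0]
    by_cases hω : ω ∈ {ω : Fin n → Bool | walk ω n < K}
    · rw [Set.indicator_of_mem hω]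
      exact le_mul_of_one_le_right (wt_nonneg hp0 hp1 ω) (one_le_zpow₀ ht (by simp at hω; omega))
    · rw [Set.indicator_of_notMem hω]
      exact mul_nonneg (wt_nonneg hp0 hp1 ω) (by positivity)
  calc prob p {ω : Fin n → Bool | walk ω n < K}
      ≤ ∑ ω : Fin n → Bool, wt p ω * (t ^ (K - 1) * ∏ i, t ^ (-step (ω i))) :=
        sum_le_sum fun ω _ => hpoint ω
    _ = t ^ (K - 1) * (p * t⁻¹ + (1 - p) * t) ^ n := by
        simp_rw [mul_left_comm (wt p _), ← mul_sum, sum_wt_mul_prod p fun b => t ^ (-step b)]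
        simp [step]

lemma tendsto_prob_le_walk {p : ℝ} (hp0 : 1 / 2 < p) (hp1 : p ≤ 1) (K : ℤ) :
    Tendsto (fun n => prob p {ω : Fin n → Bool | K ≤ walk ω n}) atTop (nhds 1) := by
  -- `t = 2p` gives `p t⁻¹ + (1 - p) t = 1 - (1 - 2p)² / 2 < 1`.
  set ρ := p * (2 * p)⁻¹ + (1 - p) * (2 * p)
  have hρ : ρ = 1 - (2 * p - 1) ^ 2 / 2 := by
    simp only [ρ]
    field_simp
    ring
  have hρ0 : 0 ≤ ρ := by rw [hρ]; nlinarith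
  have hρ1 : ρ < 1 := by rw [hρ]; nlinarith
  have hbound : Tendsto (fun n : ℕ => 1 - (2 * p) ^ (K - 1) * ρ ^ n) atTop (nhds 1) := by
    simpa using tendsto_const_nhds.sub
      ((tendsto_pow_atTop_nhds_zero_of_lt_one hρ0 hρ1).const_mul ((2 * p) ^ (K - 1)))
  refine tendsto_of_tendsto_of_tendsto_of_le_of_le hbound tendsto_const_nhds (fun n => ?_)
    fun n => prob_le_one (by linarith) hp1 _
  have hcompl : {ω : Fin n → Bool | K ≤ walk ω n}ᶜ = {ω | walk ω n < K} := by
    ext ω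
    simp
  have := prob_walk_lt_le (by linarith) hp1 (by linarith : (1 : ℝ) ≤ 2 * p) K n
  rw [← hcompl, prob_compl] at this
  linarith

lemma tendsto_prob_le_mplus {p : ℝ} (hp0 : 1 / 2 < p) (hp1 : p ≤ 1) (K : ℤ) :
    Tendsto (fun n => prob p {ω : Fin n → Bool | K ≤ mplus ω}) atTop (nhds 1) :=
  tendsto_of_tendsto_of_tendsto_of_le_of_le (tendsto_prob_le_walk hp0 hp1 K) tendsto_const_nhds
    (fun _ => prob_mono (by linarith) hp1 fun ω hω => hω.trans (walk_le_mplus ω le_rfl))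
    fun _ => prob_le_one (by linarith) hp1 _

lemma tendsto_sum_range_mul_of_tendsto_one {c : ℕ → ℝ} (hc0 : ∀ j, 0 ≤ c j) (hc : Summable c)
    {a : ℕ → ℕ → ℝ} (ha : ∀ j, Tendsto (a · j) atTop (nhds 1)) (ha1 : ∀ n j, ‖a n j‖ ≤ 1) :
    Tendsto (fun n => ∑ j ∈ range n, c j * a n j) atTop (nhds (∑' j, c j)) := by
  set f : ℕ → ℕ → ℝ := fun n j => if j < n then c j * a n j else 0
  have hf : ∀ n, ∑ j ∈ range n, c j * a n j = ∑' j, f n j := fun n => by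
    rw [tsum_eq_sum (s := range n) fun j hj => if_neg (by simpa using hj)]
    exact sum_congr rfl fun j hj => (if_pos (mem_range.1 hj)).symm
  simp_rw [hf]
  refine tendsto_tsum_of_dominated_convergence hc (fun j => ?_) (.of_forall fun n j => ?_)
  · refine (by simpa using (ha j).const_mul (c j) : Tendsto (fun n => c j * a n j) _ _).congr' ?_
    filter_upwards [eventually_gt_atTop j] with n hn
    exact (if_pos hn).symm
  · simp only [f]
    split
    · simpa [norm_mul, abs_of_nonneg (hc0 j)] using
        mul_le_mul_of_nonneg_left (ha1 n j) (hc0 j)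
    · simpa using hc0 j

lemma expectation_mplus_eq_sum {p : ℝ} (hp0 : 0 < p) (hp1 : p < 1) (n : ℕ) :
    expectation p (fun ω : Fin n → Bool => (mplus ω : ℝ)) = ∑ j ∈ range n,
      (p / (1 - p)) ^ (j + 1) * prob (1 - p) {ω : Fin n → Bool | (j : ℤ) + 1 ≤ mplus ω} := by
  rw [expectation_eq_sum_prob_lt p mplus mplus_nonneg mplus_le]
  refine sum_congr rfl fun j _ => ?_
  simp_rw [Int.lt_iff_add_one_le]
  rw [prob_le_mplus_eq hp0 hp1 (by positivity)]
  norm_cast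

theorem statement5 (p : ℝ) (hp0 : 0 < p) (hp1 : p < 1/2) :
    Tendsto (fun n : ℕ => expectation p (fun ω : Fin n → Bool => (mplus ω : ℝ)))
      atTop (nhds (p / (1 - 2 * p))) := by
  have hq0 : 1 / 2 < 1 - p := by linarith
  have hq1 : 1 - p ≤ 1 := by linarith
  set r := p / (1 - p)
  have hr0 : 0 ≤ r := by positivity
  have hr1 : r < 1 := (div_lt_one (by linarith)).2 (by linarith)
  have hsum : ∑' j : ℕ, r ^ (j + 1) = p / (1 - 2 * p) := by
    simp_rw [pow_succ', tsum_mul_left, tsum_geometric_of_lt_one hr0 hr1, r]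
    field_simp
    ring
  rw [← hsum]
  refine (tendsto_sum_range_mul_of_tendsto_one (fun j => by positivity)
    ((summable_geometric_of_lt_one hr0 hr1).mul_left r |>.congr fun j => (pow_succ' r j).symm)
    (fun j => tendsto_prob_le_mplus hq0 hq1 _) fun n j => ?_).congr
    fun n => (expectation_mplus_eq_sum hp0 (by linarith) n).symm
  rw [Real.norm_eq_abs, abs_le]
  exact ⟨by linarith [prob_nonneg (by linarith) hq1 {ω : Fin n → Bool | (j : ℤ) + 1 ≤ mplus ω}],
    prob_le_one (by linarith) hq1 _⟩
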